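/- Let S = k[x₁, …, xₙ] be a polynomial ring over a field k with homogeneous maximal ideal 𝔪 = (x₁, …, xₙ). Let J be a monomial ideal of S and let P be a set of variables such that P ∩ Supp(J) = ∅, and let 𝔭 be the ideal generated by P. Then for every integer s ≥ 0, 𝔭J ∩ 𝔪^{s+1}J = 𝔪^{s}𝔭J. -/

import Mathlib

/-!
All ideals involved are spanned by monomials, so the inclusion `⊆` can be checked on exponent
vectors. If `x^c` is divisible by `xᵢ x^a` (`i ∈ P`, `x^a ∈ G(J)`) and by `x^b x^d`
(`deg b ≥ s + 1`, `x^d ∈ G(J)`), then `xᵢ x^d` divides `x^c` because `xᵢ` does not divide `x^d`,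
and the cofactor has degree `≥ deg c - 1 - deg d ≥ s`. The inclusion `⊇` holds since `𝔭 ⊆ 𝔪`.
-/

open MvPolynomial

noncomputable section

variable {k : Type*} [Field k]

/-- A monomial ideal: an ideal generated by monomials. -/
def IsMonomialIdeal {σ : Type*} (I : Ideal (MvPolynomial σ k)) : Prop :=
  ∃ A : Set (σ →₀ ℕ), I = Ideal.span ((fun a => MvPolynomial.monomial a (1 : k)) '' A)

/-- The exponent vectors of the minimal monomial generators of a monomial ideal:
the exponents of monomials of `I` that are minimal with respect to the componentwise
order (equivalently, divisibility). -/
def minimalExponents {σ : Type*} (I : Ideal (MvPolynomial σ k)) : Set (σ →₀ ℕ) :=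
  {a : σ →₀ ℕ | MvPolynomial.monomial a (1 : k) ∈ I ∧
    ∀ b : σ →₀ ℕ, MvPolynomial.monomial b (1 : k) ∈ I → b ≤ a → b = a}

/-- `Supp(I)`: the set of variables appearing in some minimal monomial generator of `I`. -/
def idealSupport {σ : Type*} (I : Ideal (MvPolynomial σ k)) : Set σ :=
  {i : σ | ∃ a ∈ minimalExponents I, a i ≠ 0}

open Pointwise Finsupp

namespace MvPolynomial

variable {σ R : Type*} [CommSemiring R]

abbrev monomialSpan (A : Set (σ →₀ ℕ)) : Ideal (MvPolynomial σ R) :=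
  Ideal.span ((monomial · 1) '' A)

theorem monomialSpan_mul_monomialSpan (A B : Set (σ →₀ ℕ)) :
    (monomialSpan A * monomialSpan B : Ideal (MvPolynomial σ R)) = monomialSpan (A + B) := by
  unfold monomialSpan
  rw [Ideal.span_mul_span', ← Set.image2_mul, Set.image2_image_left, Set.image2_image_right,
    ← Set.image2_add, Set.image_image2]
  simp only [monomial_mul, mul_one]

theorem span_X_image_eq_monomialSpan (P : Set σ) :
    Ideal.span (X '' P : Set (MvPolynomial σ R)) = monomialSpan ((single · 1) '' P) := by
  rw [monomialSpan, Set.image_image]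
  rfl

theorem span_range_X_pow_eq_monomialSpan (n : ℕ) :
    Ideal.span (Set.range (X : σ → MvPolynomial σ R)) ^ n = monomialSpan {a | n ≤ a.degree} := by
  ext f
  rw [mem_pow_idealOfVars_iff, mem_ideal_span_monomial_image]
  exact forall₂_congr fun c _ =>
    ⟨fun h => ⟨c, h, le_rfl⟩, fun ⟨a, ha, hac⟩ => ha.trans (degree_mono hac)⟩

theorem monomialSpan_inf_le {A B C : Set (σ →₀ ℕ)}
    (h : ∀ c, (∃ a ∈ A, a ≤ c) → (∃ b ∈ B, b ≤ c) → ∃ d ∈ C, d ≤ c) :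
    (monomialSpan A ⊓ monomialSpan B : Ideal (MvPolynomial σ R)) ≤ monomialSpan C := by
  intro f hf
  rw [Ideal.mem_inf] at hf
  simp only [monomialSpan, mem_ideal_span_monomial_image] at hf ⊢
  exact fun c hc => h c (hf.1 c hc) (hf.2 c hc)

theorem monomial_mem_monomialSpan_of_le [Nontrivial R] {A : Set (σ →₀ ℕ)} {a b : σ →₀ ℕ}
    (ha : a ∈ A) (hab : a ≤ b) : monomial b (1 : R) ∈ monomialSpan A := by
  classical
  rw [monomialSpan, mem_ideal_span_monomial_image, support_monomial, if_neg one_ne_zero]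
  simpa using ⟨a, ha, hab⟩

end MvPolynomial

section MinimalExponents

variable {σ : Type*} {I : Ideal (MvPolynomial σ k)}

theorem exists_mem_minimalExponents_le {d : σ →₀ ℕ} (hd : monomial d (1 : k) ∈ I) :
    ∃ a ∈ minimalExponents I, a ≤ d := by
  obtain ⟨a, had, hmin⟩ := exists_minimal_le_of_wellFoundedLT (monomial · (1 : k) ∈ I) d hd
  exact ⟨a, ⟨hmin.prop, fun b hb hba => hmin.eq_of_le hb hba⟩, had⟩

theorem IsMonomialIdeal.eq_monomialSpan_minimalExponents (hI : IsMonomialIdeal I) :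
    I = monomialSpan (minimalExponents I) := by
  obtain ⟨A, rfl⟩ := hI
  refine le_antisymm (Ideal.span_le.2 ?_) (Ideal.span_le.2 ?_)
  · rintro _ ⟨a, ha, rfl⟩
    have haI : monomial a (1 : k) ∈ monomialSpan A :=
      Ideal.subset_span (Set.mem_image_of_mem _ ha)
    obtain ⟨m, hm, hma⟩ := exists_mem_minimalExponents_le haI
    exact monomial_mem_monomialSpan_of_le hm hma
  · rintro _ ⟨a, ha, rfl⟩
    exact ha.1

end MinimalExponents

namespace Finsupp

variable {σ : Type*}

theorem single_add_le_of_apply_eq_zero {i : σ} {a c d : σ →₀ ℕ} (hac : single i 1 + a ≤ c)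
    (hdc : d ≤ c) (hdi : d i = 0) : single i 1 + d ≤ c := by
  intro j
  by_cases hj : j = i
  · subst hj
    have := hac j
    simp only [coe_add, Pi.add_apply, single_eq_same] at this ⊢
    rw [hdi]
    omega
  · simpa [single_apply, Ne.symm hj] using hdc j

theorem exists_mem_add_le_of_apply_eq_zero {P : Set σ} {M : Set (σ →₀ ℕ)}
    (hPM : ∀ i ∈ P, ∀ d ∈ M, d i = 0) (s : ℕ) (c : σ →₀ ℕ)
    (hP : ∃ u ∈ (single · 1) '' P + M, u ≤ c) (hm : ∃ v ∈ {b | s + 1 ≤ b.degree} + M, v ≤ c) :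
    ∃ w ∈ {b | s ≤ b.degree} + ((single · 1) '' P + M), w ≤ c := by
  obtain ⟨_, ⟨_, ⟨i, hi, rfl⟩, a, -, rfl⟩, hac⟩ := hP
  obtain ⟨_, ⟨b, hb, d, hd, rfl⟩, hbdc⟩ := hm
  have hu : single i 1 + d ≤ c :=
    single_add_le_of_apply_eq_zero hac (le_add_self.trans hbdc) (hPM i hi d hd)
  refine ⟨c, ⟨c - (single i 1 + d), ?_, _, ⟨_, ⟨i, hi, rfl⟩, d, hd, rfl⟩,
    tsub_add_cancel_of_le hu⟩, le_rfl⟩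
  have hbd := degree_mono hbdc
  have hsplit := congrArg degree (tsub_add_cancel_of_le hu)
  simp only [Set.mem_ofPred_eq, map_add, degree_single] at hb hbd hsplit ⊢
  omega

end Finsupp

theorem prime_mul_inter_pow_maxIdeal_mul {k : Type*} [Field k] {n : ℕ}
    (J : Ideal (MvPolynomial (Fin n) k)) (hJ : IsMonomialIdeal J)
    (P : Set (Fin n)) (hP : ∀ i ∈ P, i ∉ idealSupport J) (s : ℕ) :
    (Ideal.span ((fun i => (X i : MvPolynomial (Fin n) k)) '' P) * J) ⊓
        (Ideal.span (Set.range (X : Fin n → MvPolynomial (Fin n) k)) ^ (s + 1) * J) =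
      Ideal.span (Set.range (X : Fin n → MvPolynomial (Fin n) k)) ^ s *
        (Ideal.span ((fun i => (X i : MvPolynomial (Fin n) k)) '' P) * J) := by
  refine le_antisymm ?_ (le_inf Ideal.mul_le_right ?_)
  · have hPM : ∀ i ∈ P, ∀ d ∈ minimalExponents J, d i = 0 :=
      fun i hi d hd => not_not.1 fun h => hP i hi ⟨d, hd, h⟩
    rw [hJ.eq_monomialSpan_minimalExponents, span_X_image_eq_monomialSpan,
      span_range_X_pow_eq_monomialSpan, span_range_X_pow_eq_monomialSpan,
      monomialSpan_mul_monomialSpan, monomialSpan_mul_monomialSpan, monomialSpan_mul_monomialSpan]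
    exact monomialSpan_inf_le (Finsupp.exists_mem_add_le_of_apply_eq_zero hPM s)
  · rw [← mul_assoc, pow_succ]
    exact Ideal.mul_mono_left (Ideal.mul_mono_right (Ideal.span_mono (Set.image_subset_range _ _)))

end
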